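/- Invariance of the radical vector expression for mutation-cyclic matrices: let B be a 3×3 skew-symmetrizable matrix with skew-symmetrizer diag(d_1,d_2,d_3) and cyclic diagram, set u(B) = (d_2|B_{23}|, d_3|B_{31}|, d_1|B_{12}|). Let (c',B') be obtained from the initial Y-seed (c_0,B) (c_0 the standard basis) by any sequence of Y-seed mutations along which all c-vectors are sign coherent and all intermediate diagrams are cyclic. Then, writing u(B') = (a',b',c'') = (d_2|B'_{23}|, d_3|B'_{31}|, d_1|B'_{12}|), we have a'·c'_1 + b'·c'_2 + c''·c'_3 = u(B). -/
import Mathlib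


open Matrix BigOperators

/-- Matrix mutation in direction `k`. -/
def mutate {n : ℕ} (B : Matrix (Fin n) (Fin n) ℤ) (k : Fin n) : Matrix (Fin n) (Fin n) ℤ :=
  fun i j =>
    if i = k ∨ j = k then -B i j
    else B i j + max (B i k) 0 * max (B k j) 0 - max (-B i k) 0 * max (-B k j) 0

/-- A vector is sign coherent: nonzero and entrywise nonnegative or entrywise nonpositive. -/
def signCoherent {n : ℕ} (c : Fin n → ℤ) : Prop :=
  c ≠ 0 ∧ ((∀ j, 0 ≤ c j) ∨ (∀ j, c j ≤ 0))

/-- The sign of a sign-coherent vector. -/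
def sgn {n : ℕ} (c : Fin n → ℤ) : ℤ :=
  if ∀ j, 0 ≤ c j then 1 else -1

/-- Mutation of the tuple of c-vectors. -/
def cmut {n : ℕ} (B : Matrix (Fin n) (Fin n) ℤ) (k : Fin n)
    (c : Fin n → Fin n → ℤ) : Fin n → Fin n → ℤ :=
  fun i => if i = k then -c k else c i + max (sgn (c k) * B k i) 0 • c k

/-- Y-seed mutation on a pair (c, B). -/
def ymut {n : ℕ} (s : (Fin n → Fin n → ℤ) × Matrix (Fin n) (Fin n) ℤ) (k : Fin n) :
    (Fin n → Fin n → ℤ) × Matrix (Fin n) (Fin n) ℤ :=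
  (cmut s.2 k s.1, mutate s.2 k)

/-- `d` is a skew-symmetrizer of `B`. -/
def skewSymmetrizer {n : ℕ} (d : Fin n → ℤ) (B : Matrix (Fin n) (Fin n) ℤ) : Prop :=
  (∀ i, 0 < d i) ∧ ∀ i j, d i * B i j = -(d j * B j i)

/-- The diagram of a 3×3 matrix is cyclic: all of B₂₁, B₃₂, B₁₃ are nonzero with equal signs. -/
def isCyclic (B : Matrix (Fin 3) (Fin 3) ℤ) : Prop :=
  (0 < B 1 0 ∧ 0 < B 2 1 ∧ 0 < B 0 2) ∨ (B 1 0 < 0 ∧ B 2 1 < 0 ∧ B 0 2 < 0)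

/-- The radical vector (d₂|B₂₃|, d₃|B₃₁|, d₁|B₁₂|) for a cyclic 3×3 matrix. -/
def ucyc (B : Matrix (Fin 3) (Fin 3) ℤ) (d : Fin 3 → ℤ) : Fin 3 → ℤ :=
  ![d 1 * |B 1 2|, d 2 * |B 2 0|, d 0 * |B 0 1|]

/-- `s` is a source of the diagram of `B`: no edges point into `s`. -/
def isSource (B : Matrix (Fin 3) (Fin 3) ℤ) (s : Fin 3) : Prop := ∀ i, i ≠ s → B s i ≤ 0

/-- `t` is a sink of the diagram of `B`: no edges point out of `t`. -/
def isSink (B : Matrix (Fin 3) (Fin 3) ℤ) (t : Fin 3) : Prop := ∀ i, i ≠ t → 0 ≤ B t i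

/-- The standard basis of ℤ^n as a tuple of c-vectors. -/
def stdc (n : ℕ) : Fin n → Fin n → ℤ := fun i j => if i = j then 1 else 0

lemma skew_mutate {n : ℕ} {d : Fin n → ℤ} {B : Matrix (Fin n) (Fin n) ℤ}
    (hd : skewSymmetrizer d B) (k : Fin n) : skewSymmetrizer d (mutate B k) := by
  obtain ⟨hpos, hsk⟩ := hd
  refine ⟨hpos, fun i j => ?_⟩
  by_cases hik : i = k
  · rw [show (mutate B k) i j = -B i j from if_pos (Or.inl hik),
      show (mutate B k) j i = -B j i from if_pos (Or.inr hik)]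
    linear_combination -hsk i j
  · by_cases hjk : j = k
    · rw [show (mutate B k) i j = -B i j from if_pos (Or.inr hjk),
        show (mutate B k) j i = -B j i from if_pos (Or.inl hjk)]
      linear_combination -hsk i j
    · simp only [mutate, hik, hjk, or_self, if_false]
      have h0 := hsk i j
      have h1 := hsk i k
      have h2 := hsk k j
      have hdk := hpos k
      have hdi := hpos i
      have hdj := hpos j
      rcases le_or_gt (B i k) 0 with hik' | hik'
      · have hki : 0 ≤ B k i := by nlinarith
        rcases le_or_gt (B k j) 0 with hkj' | hkj'
        · have hjkk : 0 ≤ B j k := by nlinarith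
          rw [max_eq_right hik', max_eq_left (by linarith : (0:ℤ) ≤ -B i k),
            max_eq_right hkj', max_eq_left (by linarith : (0:ℤ) ≤ -B k j),
            max_eq_left hjkk, max_eq_right (by linarith : -B j k ≤ 0),
            max_eq_left hki, max_eq_right (by linarith : -B k i ≤ 0)]
          linear_combination h0 - B k j * h1 + B k i * h2
        · have hjkk : B j k ≤ 0 := by nlinarith
          rw [max_eq_right hik', max_eq_left (by linarith : (0:ℤ) ≤ -B i k),
            max_eq_left hkj'.le, max_eq_right (by linarith : -B k j ≤ 0),
            max_eq_right hjkk, max_eq_left (by linarith : (0:ℤ) ≤ -B j k),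
            max_eq_left hki, max_eq_right (by linarith : -B k i ≤ 0)]
          linear_combination h0
      · have hki : B k i ≤ 0 := by nlinarith
        rcases le_or_gt (B k j) 0 with hkj' | hkj'
        · have hjkk : 0 ≤ B j k := by nlinarith
          rw [max_eq_left hik'.le, max_eq_right (by linarith : -B i k ≤ 0),
            max_eq_right hkj', max_eq_left (by linarith : (0:ℤ) ≤ -B k j),
            max_eq_left hjkk, max_eq_right (by linarith : -B j k ≤ 0),
            max_eq_right hki, max_eq_left (by linarith : (0:ℤ) ≤ -B k i)]
          linear_combination h0
        · have hjkk : B j k ≤ 0 := by nlinarith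
          rw [max_eq_left hik'.le, max_eq_right (by linarith : -B i k ≤ 0),
            max_eq_left hkj'.le, max_eq_right (by linarith : -B k j ≤ 0),
            max_eq_right hjkk, max_eq_left (by linarith : (0:ℤ) ≤ -B j k),
            max_eq_right hki, max_eq_left (by linarith : (0:ℤ) ≤ -B k i)]
          linear_combination h0 + B k j * h1 - B k i * h2

set_option maxHeartbeats 1600000 in
lemma step (B : Matrix (Fin 3) (Fin 3) ℤ) (d : Fin 3 → ℤ) (c : Fin 3 → Fin 3 → ℤ)
    (hd : skewSymmetrizer d B) (hB : isCyclic B) (k : Fin 3)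
    (hB' : isCyclic (mutate B k)) (m : Fin 3) :
    ∑ i, ucyc (mutate B k) d i * cmut B k c i m = ∑ i, ucyc B d i * c i m := by
  have hd' := skew_mutate hd k
  obtain ⟨hpos, hsk⟩ := hd
  have hk : k = 0 ∨ k = 1 ∨ k = 2 := by fin_cases k <;> simp
  rcases hk with rfl | rfl | rfl
  · -- k = 0
    have e10 : mutate B 0 1 0 = -B 1 0 := if_pos (by decide)
    have e01 : mutate B 0 0 1 = -B 0 1 := if_pos (by decide)
    have e02 : mutate B 0 0 2 = -B 0 2 := if_pos (by decide)
    have e20 : mutate B 0 2 0 = -B 2 0 := if_pos (by decide)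
    have e12 : mutate B 0 1 2 = B 1 2 + max (B 1 0) 0 * max (B 0 2) 0
        - max (-B 1 0) 0 * max (-B 0 2) 0 := if_neg (by decide)
    have e21 : mutate B 0 2 1 = B 2 1 + max (B 2 0) 0 * max (B 0 1) 0
        - max (-B 2 0) 0 * max (-B 0 1) 0 := if_neg (by decide)
    rcases hB with ⟨h10, h21, h02⟩ | ⟨h10, h21, h02⟩
    · -- positive cyclic: B10>0, B21>0, B02>0 so B01<0, B12<0, B20<0
      have h01 : B 0 1 < 0 := by nlinarith [hsk 1 0, hpos 0, hpos 1]
      have h12 : B 1 2 < 0 := by nlinarith [hsk 2 1, hpos 1, hpos 2]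
      have h20 : B 2 0 < 0 := by nlinarith [hsk 0 2, hpos 0, hpos 2]
      rw [max_eq_left h10.le, max_eq_left h02.le,
        max_eq_right (by linarith : -B 1 0 ≤ 0)] at e12
      rw [max_eq_right (by linarith : B 2 0 ≤ 0),
        max_eq_left (by linarith : (0:ℤ) ≤ -B 2 0),
        max_eq_left (by linarith : (0:ℤ) ≤ -B 0 1)] at e21
      have e12' : mutate B 0 1 2 = B 1 2 + B 1 0 * B 0 2 := by rw [e12]; ring
      have e21' : mutate B 0 2 1 = B 2 1 - B 2 0 * B 0 1 := by rw [e21]; ring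
      rcases hB' with ⟨hm10, hm21, hm02⟩ | ⟨hm10, hm21, hm02⟩
      · rw [e10] at hm10; linarith
      have hm12 : 0 < mutate B 0 1 2 := by nlinarith [hd'.2 1 2, hd'.1 1, hd'.1 2, hm21]
      rw [e12'] at hm12
      simp only [Fin.sum_univ_three, ucyc, cmut, Matrix.cons_val_zero, Matrix.cons_val_one,
        Matrix.head_cons, Matrix.cons_val_two, Matrix.tail_cons, Pi.add_apply, Pi.smul_apply,
        smul_eq_mul, Pi.neg_apply, if_pos rfl, if_true,
        if_neg (by decide : ¬(1:Fin 3) = 0), if_neg (by decide : ¬(2:Fin 3) = 0)]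
      rw [e12', e20, e01]
      rw [abs_of_pos hm12,
        abs_of_pos (by linarith : (0:ℤ) < -B 2 0), abs_of_pos (by linarith : (0:ℤ) < -B 0 1),
        abs_of_neg h12, abs_of_neg h20, abs_of_neg h01]
      by_cases hs : ∀ j, 0 ≤ c 0 j
      · simp only [sgn, if_pos hs, one_mul]
        rw [max_eq_right h01.le, max_eq_left h02.le]
        linear_combination (-(c 0 m) * B 0 2) * hsk 0 1
      · simp only [sgn, if_neg hs, neg_one_mul]
        rw [max_eq_left (by linarith : (0:ℤ) ≤ -B 0 1), max_eq_right (by linarith : -B 0 2 ≤ 0)]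
        linear_combination (c 0 m * B 0 1) * hsk 0 2 - (c 0 m * B 0 2) * hsk 0 1
    · -- negative cyclic
      have h01 : 0 < B 0 1 := by nlinarith [hsk 1 0, hpos 0, hpos 1]
      have h12 : 0 < B 1 2 := by nlinarith [hsk 2 1, hpos 1, hpos 2]
      have h20 : 0 < B 2 0 := by nlinarith [hsk 0 2, hpos 0, hpos 2]
      rw [max_eq_right h10.le, max_eq_left (by linarith : (0:ℤ) ≤ -B 1 0),
        max_eq_left (by linarith : (0:ℤ) ≤ -B 0 2)] at e12
      rw [max_eq_left h20.le, max_eq_left h01.le,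
        max_eq_right (by linarith : -B 2 0 ≤ 0)] at e21
      have e12' : mutate B 0 1 2 = B 1 2 - B 1 0 * B 0 2 := by rw [e12]; ring
      have e21' : mutate B 0 2 1 = B 2 1 + B 2 0 * B 0 1 := by rw [e21]; ring
      rcases hB' with ⟨hm10, hm21, hm02⟩ | ⟨hm10, hm21, hm02⟩
      · have hm12 : mutate B 0 1 2 < 0 := by nlinarith [hd'.2 1 2, hd'.1 1, hd'.1 2, hm21]
        rw [e12'] at hm12
        simp only [Fin.sum_univ_three, ucyc, cmut, Matrix.cons_val_zero, Matrix.cons_val_one,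
          Matrix.head_cons, Matrix.cons_val_two, Matrix.tail_cons, Pi.add_apply, Pi.smul_apply,
          smul_eq_mul, Pi.neg_apply, if_pos rfl, if_true,
          if_neg (by decide : ¬(1:Fin 3) = 0), if_neg (by decide : ¬(2:Fin 3) = 0)]
        rw [e12', e20, e01]
        rw [abs_of_neg hm12, abs_of_neg (show -B 2 0 < 0 by linarith),
          abs_of_neg (show -B 0 1 < 0 by linarith),
          abs_of_pos h12, abs_of_pos h20, abs_of_pos h01]
        by_cases hs : ∀ j, 0 ≤ c 0 j
        · simp only [sgn, if_pos hs, one_mul]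
          rw [max_eq_left h01.le, max_eq_right h02.le]
          linear_combination (c 0 m * B 0 1) * hsk 0 2 - (c 0 m * B 0 2) * hsk 0 1
        · simp only [sgn, if_neg hs, neg_one_mul]
          rw [max_eq_right (by linarith : -B 0 1 ≤ 0),
            max_eq_left (by linarith : (0:ℤ) ≤ -B 0 2)]
          linear_combination (-(c 0 m) * B 0 2) * hsk 0 1
      · rw [e10] at hm10; linarith
  · -- k = 1
    have e01 : mutate B 1 0 1 = -B 0 1 := if_pos (by decide)
    have e10 : mutate B 1 1 0 = -B 1 0 := if_pos (by decide)
    have e21 : mutate B 1 2 1 = -B 2 1 := if_pos (by decide)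
    have e12 : mutate B 1 1 2 = -B 1 2 := if_pos (by decide)
    have e20 : mutate B 1 2 0 = B 2 0 + max (B 2 1) 0 * max (B 1 0) 0
        - max (-B 2 1) 0 * max (-B 1 0) 0 := if_neg (by decide)
    have e02 : mutate B 1 0 2 = B 0 2 + max (B 0 1) 0 * max (B 1 2) 0
        - max (-B 0 1) 0 * max (-B 1 2) 0 := if_neg (by decide)
    rcases hB with ⟨h10, h21, h02⟩ | ⟨h10, h21, h02⟩
    · have h01 : B 0 1 < 0 := by nlinarith [hsk 1 0, hpos 0, hpos 1]
      have h12 : B 1 2 < 0 := by nlinarith [hsk 2 1, hpos 1, hpos 2]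
      have h20 : B 2 0 < 0 := by nlinarith [hsk 0 2, hpos 0, hpos 2]
      rw [max_eq_left h21.le, max_eq_left h10.le,
        max_eq_right (by linarith : -B 2 1 ≤ 0)] at e20
      rw [max_eq_right h01.le, max_eq_left (by linarith : (0:ℤ) ≤ -B 0 1),
        max_eq_left (by linarith : (0:ℤ) ≤ -B 1 2)] at e02
      have e20' : mutate B 1 2 0 = B 2 0 + B 2 1 * B 1 0 := by rw [e20]; ring
      have e02' : mutate B 1 0 2 = B 0 2 - B 0 1 * B 1 2 := by rw [e02]; ring
      rcases hB' with ⟨hm10, hm21, hm02⟩ | ⟨hm10, hm21, hm02⟩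
      · rw [e21] at hm21; linarith
      have hm20 : 0 < mutate B 1 2 0 := by nlinarith [hd'.2 0 2, hd'.1 0, hd'.1 2, hm02]
      rw [e20'] at hm20
      simp only [Fin.sum_univ_three, ucyc, cmut, Matrix.cons_val_zero, Matrix.cons_val_one,
        Matrix.head_cons, Matrix.cons_val_two, Matrix.tail_cons, Pi.add_apply, Pi.smul_apply,
        smul_eq_mul, Pi.neg_apply, if_pos rfl, if_true,
        if_neg (by decide : ¬(0:Fin 3) = 1), if_neg (by decide : ¬(2:Fin 3) = 1)]
      rw [e12, e20', e01]
      rw [abs_of_pos (show (0:ℤ) < -B 1 2 by linarith), abs_of_pos hm20,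
        abs_of_pos (show (0:ℤ) < -B 0 1 by linarith),
        abs_of_neg h12, abs_of_neg h20, abs_of_neg h01]
      by_cases hs : ∀ j, 0 ≤ c 1 j
      · simp only [sgn, if_pos hs, one_mul]
        rw [max_eq_left h10.le, max_eq_right h12.le]
        linear_combination (-(c 1 m) * B 1 0) * hsk 1 2
      · simp only [sgn, if_neg hs, neg_one_mul]
        rw [max_eq_right (by linarith : -B 1 0 ≤ 0),
          max_eq_left (by linarith : (0:ℤ) ≤ -B 1 2)]
        linear_combination (c 1 m * B 1 2) * hsk 0 1 - (c 1 m * B 1 0) * hsk 2 1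
    · have h01 : 0 < B 0 1 := by nlinarith [hsk 1 0, hpos 0, hpos 1]
      have h12 : 0 < B 1 2 := by nlinarith [hsk 2 1, hpos 1, hpos 2]
      have h20 : 0 < B 2 0 := by nlinarith [hsk 0 2, hpos 0, hpos 2]
      rw [max_eq_right h21.le, max_eq_left (by linarith : (0:ℤ) ≤ -B 2 1),
        max_eq_left (by linarith : (0:ℤ) ≤ -B 1 0)] at e20
      rw [max_eq_left h01.le, max_eq_left h12.le,
        max_eq_right (by linarith : -B 0 1 ≤ 0)] at e02
      have e20' : mutate B 1 2 0 = B 2 0 - B 2 1 * B 1 0 := by rw [e20]; ring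
      have e02' : mutate B 1 0 2 = B 0 2 + B 0 1 * B 1 2 := by rw [e02]; ring
      rcases hB' with ⟨hm10, hm21, hm02⟩ | ⟨hm10, hm21, hm02⟩
      swap
      · rw [e21] at hm21; linarith
      have hm20 : mutate B 1 2 0 < 0 := by nlinarith [hd'.2 0 2, hd'.1 0, hd'.1 2, hm02]
      rw [e20'] at hm20
      simp only [Fin.sum_univ_three, ucyc, cmut, Matrix.cons_val_zero, Matrix.cons_val_one,
        Matrix.head_cons, Matrix.cons_val_two, Matrix.tail_cons, Pi.add_apply, Pi.smul_apply,
        smul_eq_mul, Pi.neg_apply, if_pos rfl, if_true,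
        if_neg (by decide : ¬(0:Fin 3) = 1), if_neg (by decide : ¬(2:Fin 3) = 1)]
      rw [e12, e20', e01]
      rw [abs_of_neg (show -B 1 2 < 0 by linarith), abs_of_neg hm20,
        abs_of_neg (show -B 0 1 < 0 by linarith),
        abs_of_pos h12, abs_of_pos h20, abs_of_pos h01]
      by_cases hs : ∀ j, 0 ≤ c 1 j
      · simp only [sgn, if_pos hs, one_mul]
        rw [max_eq_right h10.le, max_eq_left h12.le]
        linear_combination (c 1 m * B 1 2) * hsk 0 1 - (c 1 m * B 1 0) * hsk 2 1
      · simp only [sgn, if_neg hs, neg_one_mul]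
        rw [max_eq_left (by linarith : (0:ℤ) ≤ -B 1 0),
          max_eq_right (by linarith : -B 1 2 ≤ 0)]
        linear_combination (-(c 1 m) * B 1 0) * hsk 1 2
  · -- k = 2
    have e02 : mutate B 2 0 2 = -B 0 2 := if_pos (by decide)
    have e20 : mutate B 2 2 0 = -B 2 0 := if_pos (by decide)
    have e12 : mutate B 2 1 2 = -B 1 2 := if_pos (by decide)
    have e21 : mutate B 2 2 1 = -B 2 1 := if_pos (by decide)
    have e01 : mutate B 2 0 1 = B 0 1 + max (B 0 2) 0 * max (B 2 1) 0
        - max (-B 0 2) 0 * max (-B 2 1) 0 := if_neg (by decide)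
    have e10 : mutate B 2 1 0 = B 1 0 + max (B 1 2) 0 * max (B 2 0) 0
        - max (-B 1 2) 0 * max (-B 2 0) 0 := if_neg (by decide)
    rcases hB with ⟨h10, h21, h02⟩ | ⟨h10, h21, h02⟩
    · have h01 : B 0 1 < 0 := by nlinarith [hsk 1 0, hpos 0, hpos 1]
      have h12 : B 1 2 < 0 := by nlinarith [hsk 2 1, hpos 1, hpos 2]
      have h20 : B 2 0 < 0 := by nlinarith [hsk 0 2, hpos 0, hpos 2]
      rw [max_eq_left h02.le, max_eq_left h21.le,
        max_eq_right (by linarith : -B 0 2 ≤ 0)] at e01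
      rw [max_eq_right h12.le, max_eq_left (by linarith : (0:ℤ) ≤ -B 1 2),
        max_eq_left (by linarith : (0:ℤ) ≤ -B 2 0)] at e10
      have e01' : mutate B 2 0 1 = B 0 1 + B 0 2 * B 2 1 := by rw [e01]; ring
      have e10' : mutate B 2 1 0 = B 1 0 - B 1 2 * B 2 0 := by rw [e10]; ring
      rcases hB' with ⟨hm10, hm21, hm02⟩ | ⟨hm10, hm21, hm02⟩
      · rw [e02] at hm02; linarith
      have hm01 : 0 < mutate B 2 0 1 := by nlinarith [hd'.2 1 0, hd'.1 0, hd'.1 1, hm10]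
      rw [e01'] at hm01
      simp only [Fin.sum_univ_three, ucyc, cmut, Matrix.cons_val_zero, Matrix.cons_val_one,
        Matrix.head_cons, Matrix.cons_val_two, Matrix.tail_cons, Pi.add_apply, Pi.smul_apply,
        smul_eq_mul, Pi.neg_apply, if_pos rfl, if_true,
        if_neg (by decide : ¬(0:Fin 3) = 2), if_neg (by decide : ¬(1:Fin 3) = 2)]
      rw [e12, e20, e01']
      rw [abs_of_pos (show (0:ℤ) < -B 1 2 by linarith),
        abs_of_pos (show (0:ℤ) < -B 2 0 by linarith), abs_of_pos hm01,
        abs_of_neg h12, abs_of_neg h20, abs_of_neg h01]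
      by_cases hs : ∀ j, 0 ≤ c 2 j
      · simp only [sgn, if_pos hs, one_mul]
        rw [max_eq_right h20.le, max_eq_left h21.le]
        linear_combination (-(c 2 m) * B 2 1) * hsk 2 0
      · simp only [sgn, if_neg hs, neg_one_mul]
        rw [max_eq_left (by linarith : (0:ℤ) ≤ -B 2 0),
          max_eq_right (by linarith : -B 2 1 ≤ 0)]
        linear_combination (c 2 m * B 2 0) * hsk 1 2 - (c 2 m * B 2 1) * hsk 2 0
    · have h01 : 0 < B 0 1 := by nlinarith [hsk 1 0, hpos 0, hpos 1]
      have h12 : 0 < B 1 2 := by nlinarith [hsk 2 1, hpos 1, hpos 2]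
      have h20 : 0 < B 2 0 := by nlinarith [hsk 0 2, hpos 0, hpos 2]
      rw [max_eq_right h02.le, max_eq_left (by linarith : (0:ℤ) ≤ -B 0 2),
        max_eq_left (by linarith : (0:ℤ) ≤ -B 2 1)] at e01
      rw [max_eq_left h12.le, max_eq_left h20.le,
        max_eq_right (by linarith : -B 1 2 ≤ 0)] at e10
      have e01' : mutate B 2 0 1 = B 0 1 - B 0 2 * B 2 1 := by rw [e01]; ring
      have e10' : mutate B 2 1 0 = B 1 0 + B 1 2 * B 2 0 := by rw [e10]; ring
      rcases hB' with ⟨hm10, hm21, hm02⟩ | ⟨hm10, hm21, hm02⟩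
      swap
      · rw [e02] at hm02; linarith
      have hm01 : mutate B 2 0 1 < 0 := by nlinarith [hd'.2 1 0, hd'.1 0, hd'.1 1, hm10]
      rw [e01'] at hm01
      simp only [Fin.sum_univ_three, ucyc, cmut, Matrix.cons_val_zero, Matrix.cons_val_one,
        Matrix.head_cons, Matrix.cons_val_two, Matrix.tail_cons, Pi.add_apply, Pi.smul_apply,
        smul_eq_mul, Pi.neg_apply, if_pos rfl, if_true,
        if_neg (by decide : ¬(0:Fin 3) = 2), if_neg (by decide : ¬(1:Fin 3) = 2)]
      rw [e12, e20, e01']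
      rw [abs_of_neg (show -B 1 2 < 0 by linarith),
        abs_of_neg (show -B 2 0 < 0 by linarith), abs_of_neg hm01,
        abs_of_pos h12, abs_of_pos h20, abs_of_pos h01]
      by_cases hs : ∀ j, 0 ≤ c 2 j
      · simp only [sgn, if_pos hs, one_mul]
        rw [max_eq_left h20.le, max_eq_right h21.le]
        linear_combination (c 2 m * B 2 0) * hsk 1 2 - (c 2 m * B 2 1) * hsk 2 0
      · simp only [sgn, if_neg hs, neg_one_mul]
        rw [max_eq_right (by linarith : -B 2 0 ≤ 0),
          max_eq_left (by linarith : (0:ℤ) ≤ -B 2 1)]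
        linear_combination (-(c 2 m) * B 2 1) * hsk 2 0


lemma skew_foldl {n : ℕ} {d : Fin n → ℤ} :
    ∀ (l : List (Fin n)) (s : (Fin n → Fin n → ℤ) × Matrix (Fin n) (Fin n) ℤ),
      skewSymmetrizer d s.2 → skewSymmetrizer d ((l.foldl ymut s).2) := by
  intro l
  induction l with
  | nil => exact fun s h => h
  | cons a t ih => exact fun s h => ih _ (skew_mutate h a)

theorem radical_invariance_mutation_cyclic (B : Matrix (Fin 3) (Fin 3) ℤ)
    (d : Fin 3 → ℤ) (hd : skewSymmetrizer d B) (hcyc : isCyclic B)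
    (l : List (Fin 3))
    (h : ∀ j ≤ l.length,
      (∀ i, signCoherent (((l.take j).foldl ymut (stdc 3, B)).1 i)) ∧
        isCyclic ((l.take j).foldl ymut (stdc 3, B)).2) :
    (fun m => ∑ i, ucyc (l.foldl ymut (stdc 3, B)).2 d i *
        (l.foldl ymut (stdc 3, B)).1 i m) = ucyc B d := by
  induction l using List.reverseRecOn with
  | nil =>
    funext m
    rw [Fin.sum_univ_three]
    fin_cases m <;> simp [stdc, ucyc] <;> ring
  | append_singleton l' k ih =>
    have hsub : ∀ j ≤ l'.length,
        (∀ i, signCoherent (((l'.take j).foldl ymut (stdc 3, B)).1 i)) ∧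
          isCyclic ((l'.take j).foldl ymut (stdc 3, B)).2 := by
      intro j hj
      have := h j (by simp; omega)
      rwa [List.take_append_of_le_length hj] at this
    have hdmid : skewSymmetrizer d (l'.foldl ymut (stdc 3, B)).2 := skew_foldl l' _ hd
    have hBmid : isCyclic (l'.foldl ymut (stdc 3, B)).2 := by
      have := (h l'.length (by simp)).2
      rwa [List.take_left] at this
    have hBfin : isCyclic ((l' ++ [k]).foldl ymut (stdc 3, B)).2 := by
      have := (h (l' ++ [k]).length le_rfl).2
      rwa [List.take_length] at this
    simp only [List.foldl_append, List.foldl_cons, List.foldl_nil] at hBfin ⊢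
    funext m
    have hstep := step (l'.foldl ymut (stdc 3, B)).2 d (l'.foldl ymut (stdc 3, B)).1
      hdmid hBmid k hBfin m
    calc ∑ i, ucyc (ymut (l'.foldl ymut (stdc 3, B)) k).2 d i *
            (ymut (l'.foldl ymut (stdc 3, B)) k).1 i m
        = ∑ i, ucyc (l'.foldl ymut (stdc 3, B)).2 d i *
            (l'.foldl ymut (stdc 3, B)).1 i m := hstep
      _ = ucyc B d m := congrFun (ih hsub) m
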